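/- Let X be a real Banach space whose modulus of smoothness ρ_X has power type p for some p ∈ (1, 2], i.e. there is A > 0 with ρ_X(τ) ≤ A·τ^p for all τ ∈ (0, 1]. Then there exists a constant C' > 0 (depending only on A and p) such that for every bounded set S ⊆ X, every ε > 0, every integer k ≥ C'·(diam(S)/ε)^{p/(p−1)}, and every a ∈ conv S, the distance from a to conv_k S is at most ε; in particular h⁺(conv S, conv_k S) ≤ ε for all such k. -/

import Mathlib

/-!
Greedy approximation. For `K = (2 + 2A) ^ p`, the power-type bound on the modulus of smoothness
gives, for every `u`, a norming functional `f` such that `‖u + v‖ ^ p ≤ ‖u‖ ^ p + K ‖v‖ ^ p`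
whenever `f v ≤ 0`. Since `a ∈ conv S`, some `z ∈ S` has `f (z - a) ≤ 0`, so points
`z₁, z₂, … ∈ S` can be chosen one at a time with `‖∑_{i ≤ n} (zᵢ - a)‖ ^ p ≤ n K (diam S) ^ p`.
The average of `z₁, …, zₙ` lies in `conv_n S` at distance at most `(nK)^{1/p} diam S / n` from
`a`, which is at most `ε` once `n ≥ K^{1/(p-1)} (diam S / ε)^{p/(p-1)}`.
-/

/-- The modulus of smoothness (Lindenstrauss modulus) of a real normed space `X`:
`ρ_X(τ) = sup { (‖x + τy‖ + ‖x − τy‖)/2 − 1 : ‖x‖ = ‖y‖ ≤ 1 }`. -/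
noncomputable def modSmooth (X : Type*) [NormedAddCommGroup X] [NormedSpace ℝ X] (τ : ℝ) : ℝ :=
  sSup {r : ℝ | ∃ x y : X, ‖x‖ = ‖y‖ ∧ ‖y‖ ≤ 1 ∧
    r = (‖x + τ • y‖ + ‖x - τ • y‖) / 2 - 1}

/-- The `k`-convex hull of a set `S`: all convex combinations of at most `k` points
of `S`. -/
def convHullK {X : Type*} [NormedAddCommGroup X] [NormedSpace ℝ X] (k : ℕ) (S : Set X) :
    Set X :=
  ⋃ (F : Finset X) (_ : ↑F ⊆ S) (_ : F.card ≤ k), convexHull ℝ (F : Set X)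

open Metric

section ModulusOfSmoothness

variable {X : Type*} [NormedAddCommGroup X] [NormedSpace ℝ X]

lemma modSmooth_bddAbove (τ : ℝ) :
    BddAbove {r : ℝ | ∃ x y : X, ‖x‖ = ‖y‖ ∧ ‖y‖ ≤ 1 ∧
      r = (‖x + τ • y‖ + ‖x - τ • y‖) / 2 - 1} := by
  refine ⟨|τ|, ?_⟩
  rintro _ ⟨x, y, hxy, hy, rfl⟩
  have hτy : ‖τ • y‖ ≤ |τ| := by
    rw [norm_smul, Real.norm_eq_abs]
    exact mul_le_of_le_one_right (abs_nonneg τ) hy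
  have := norm_add_le x (τ • y)
  have := norm_sub_le x (τ • y)
  linarith

lemma le_modSmooth (τ : ℝ) {x y : X} (hxy : ‖x‖ = ‖y‖) (hy : ‖y‖ ≤ 1) :
    (‖x + τ • y‖ + ‖x - τ • y‖) / 2 - 1 ≤ modSmooth X τ :=
  le_csSup (modSmooth_bddAbove τ) ⟨x, y, hxy, hy, rfl⟩

lemma norm_add_add_norm_sub_le_modSmooth {u v : X} (hu : u ≠ 0) (hv : v ≠ 0) :
    ‖u + v‖ + ‖u - v‖ ≤ 2 * ‖u‖ * (1 + modSmooth X (‖v‖ / ‖u‖)) := by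
  have hτ : (‖v‖ / ‖u‖) • ‖v‖⁻¹ • v = ‖u‖⁻¹ • v := by
    rw [smul_smul]
    congr 1
    field_simp
  have h := le_modSmooth (‖v‖ / ‖u‖) (x := ‖u‖⁻¹ • u) (y := ‖v‖⁻¹ • v)
    ((norm_smul_inv_norm hu).trans (norm_smul_inv_norm hv).symm) (norm_smul_inv_norm hv).le
  rw [hτ, ← smul_add, ← smul_sub, norm_smul, norm_smul, norm_inv, norm_norm, ← mul_add,
    inv_mul_eq_div, div_div, div_sub_one (by positivity), div_le_iff₀ (by positivity)] at h
  linarith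

lemma norm_add_le_add_modSmooth {u v : X} (hu : u ≠ 0) (hv : v ≠ 0) {f : StrongDual ℝ X}
    (hf : ‖f‖ ≤ 1) (hfu : f u = ‖u‖) :
    ‖u + v‖ ≤ ‖u‖ + f v + 2 * ‖u‖ * modSmooth X (‖v‖ / ‖u‖) := by
  have hfuv : f (u - v) ≤ ‖u - v‖ := by
    simpa using (le_abs_self _).trans (f.le_of_opNorm_le hf (u - v))
  rw [map_sub, hfu] at hfuv
  linarith [norm_add_add_norm_sub_le_modSmooth hu hv]

end ModulusOfSmoothness

lemma one_add_mul_rpow_le {p c t : ℝ} (hp : 1 ≤ p) (hc : 0 ≤ c) (ht0 : 0 ≤ t) (ht1 : t ≤ 1) :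
    (1 + c * t) ^ p ≤ 1 + ((1 + c) ^ p - 1) * t := by
  have h := (convexOn_rpow hp).2 (Set.mem_Ici.2 (by positivity : (0 : ℝ) ≤ 1 + c))
    (Set.mem_Ici.2 zero_le_one) ht0 (sub_nonneg.2 ht1) (add_sub_cancel t 1)
  simp only [smul_eq_mul, Real.one_rpow, mul_one] at h
  calc (1 + c * t) ^ p = (t * (1 + c) + (1 - t)) ^ p := by ring_nf
    _ ≤ t * (1 + c) ^ p + (1 - t) := h
    _ = 1 + ((1 + c) ^ p - 1) * t := by ring

section PowerType

variable {X : Type*} [NormedAddCommGroup X] [NormedSpace ℝ X] {p A : ℝ}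

lemma norm_add_rpow_le_of_modSmooth_le (hp : 1 ≤ p) (hA : 0 ≤ A)
    (hpow : ∀ τ ∈ Set.Ioc (0 : ℝ) 1, modSmooth X τ ≤ A * τ ^ p)
    {u v : X} {f : StrongDual ℝ X} (hf : ‖f‖ ≤ 1) (hfu : f u = ‖u‖) (hfv : f v ≤ 0) :
    ‖u + v‖ ^ p ≤ ‖u‖ ^ p + (2 + 2 * A) ^ p * ‖v‖ ^ p := by
  have hp0 : 0 < p := by linarith
  rcases eq_or_ne v 0 with rfl | hv
  · simp [Real.zero_rpow hp0.ne']
  rcases lt_or_ge ‖u‖ ‖v‖ with huv | hvu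
  · have h2v : ‖u + v‖ ≤ (2 + 2 * A) * ‖v‖ := by
      nlinarith [norm_add_le u v, norm_nonneg v]
    calc ‖u + v‖ ^ p ≤ ((2 + 2 * A) * ‖v‖) ^ p := by gcongr
      _ = (2 + 2 * A) ^ p * ‖v‖ ^ p := Real.mul_rpow (by positivity) (norm_nonneg v)
      _ ≤ ‖u‖ ^ p + (2 + 2 * A) ^ p * ‖v‖ ^ p := le_add_of_nonneg_left (by positivity)
  have hv0 : 0 < ‖v‖ := norm_pos_iff.2 hv
  have hu0 : 0 < ‖u‖ := hv0.trans_le hvu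
  set τ := ‖v‖ / ‖u‖ with hτ
  have hτ0 : 0 < τ := div_pos hv0 hu0
  have hτ1 : τ ≤ 1 := (div_le_one hu0).2 hvu
  have hτp : ‖u‖ ^ p * τ ^ p = ‖v‖ ^ p := by
    rw [hτ, Real.div_rpow hv0.le hu0.le, mul_div_cancel₀ _ (Real.rpow_pos_of_pos hu0 p).ne']
  have hstep : ‖u + v‖ ≤ ‖u‖ * (1 + 2 * A * τ ^ p) := by
    have := norm_add_le_add_modSmooth (norm_pos_iff.1 hu0) hv hf hfu
    nlinarith [hpow τ ⟨hτ0, hτ1⟩]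
  have hgrowth : (1 + 2 * A) ^ p ≤ (2 + 2 * A) ^ p := by gcongr; linarith
  calc ‖u + v‖ ^ p ≤ (‖u‖ * (1 + 2 * A * τ ^ p)) ^ p := by gcongr
    _ = ‖u‖ ^ p * (1 + 2 * A * τ ^ p) ^ p := Real.mul_rpow hu0.le (by positivity)
    _ ≤ ‖u‖ ^ p * (1 + ((1 + 2 * A) ^ p - 1) * τ ^ p) := by
        gcongr
        exact one_add_mul_rpow_le hp (by positivity) (by positivity)
          (Real.rpow_le_one hτ0.le hτ1 hp0.le)
    _ = ‖u‖ ^ p + ((1 + 2 * A) ^ p - 1) * ‖v‖ ^ p := by rw [← hτp]; ring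
    _ ≤ ‖u‖ ^ p + (2 + 2 * A) ^ p * ‖v‖ ^ p := by
        gcongr
        linarith

lemma exists_dual_norm_add_rpow_le (hp : 1 ≤ p) (hA : 0 ≤ A)
    (hpow : ∀ τ ∈ Set.Ioc (0 : ℝ) 1, modSmooth X τ ≤ A * τ ^ p) (u : X) :
    ∃ f : StrongDual ℝ X, ∀ v, f v ≤ 0 → ‖u + v‖ ^ p ≤ ‖u‖ ^ p + (2 + 2 * A) ^ p * ‖v‖ ^ p := by
  rcases eq_or_ne u 0 with rfl | hu
  · exact ⟨0, fun v _ => norm_add_rpow_le_of_modSmooth_le hp hA hpow (f := 0) (by simp) (by simp)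
      (by simp)⟩
  obtain ⟨f, hf, hfu⟩ := exists_dual_vector ℝ u (norm_ne_zero_iff.2 hu)
  exact ⟨f, fun v hfv => norm_add_rpow_le_of_modSmooth_le hp hA hpow hf.le (by simpa using hfu) hfv⟩

end PowerType

lemma exists_apply_le_of_mem_convexHull {E : Type*} [AddCommGroup E] [Module ℝ E]
    (f : E →ₗ[ℝ] ℝ) {S : Set E} {a : E} (ha : a ∈ convexHull ℝ S) : ∃ z ∈ S, f z ≤ f a := by
  by_contra! h
  exact lt_irrefl (f a) (convexHull_min h (convex_halfSpace_gt f.isLinear (f a)) ha)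

section Greedy

variable {X : Type*} [NormedAddCommGroup X] [NormedSpace ℝ X] {p K D : ℝ} {S : Set X} {a : X}

lemma convHullK_zero : convHullK 0 S = ∅ := by
  simp [convHullK]

lemma inv_smul_sum_mem_convHullK {n : ℕ} (hn : n ≠ 0) {g : Fin n → X} (hg : ∀ i, g i ∈ S) :
    (n : ℝ)⁻¹ • ∑ i, g i ∈ convHullK n S := by
  classical
  simp only [convHullK, Set.mem_iUnion]
  refine ⟨Finset.univ.image g, by simpa [Set.range_subset_iff] using hg,
    Finset.card_image_le.trans (by simp), ?_⟩
  rw [Finset.smul_sum]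
  exact (convex_convexHull ℝ _).sum_mem (fun _ _ => by positivity) (by simp [hn])
    (fun i _ => subset_convexHull ℝ _ (by simp))

lemma exists_mem_norm_sum_sub_rpow_le (hp : 0 < p) (hK : 0 ≤ K)
    (hsmooth : ∀ u : X, ∃ f : StrongDual ℝ X, ∀ v, f v ≤ 0 → ‖u + v‖ ^ p ≤ ‖u‖ ^ p + K * ‖v‖ ^ p)
    (ha : a ∈ convexHull ℝ S) (hSa : ∀ z ∈ S, ‖z - a‖ ≤ D) :
    ∀ n : ℕ, ∃ g : Fin n → X, (∀ i, g i ∈ S) ∧ ‖∑ i, (g i - a)‖ ^ p ≤ n * (K * D ^ p)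
  | 0 => ⟨Fin.elim0, fun i => i.elim0, by simp [Real.zero_rpow hp.ne']⟩
  | n + 1 => by
    obtain ⟨g, hgS, hg⟩ := exists_mem_norm_sum_sub_rpow_le hp hK hsmooth ha hSa n
    obtain ⟨f, hf⟩ := hsmooth (∑ i, (g i - a))
    obtain ⟨z, hzS, hfz⟩ := exists_apply_le_of_mem_convexHull (f : X →ₗ[ℝ] ℝ) ha
    refine ⟨Fin.snoc g z, Fin.lastCases (by simpa using hzS) (by simpa using hgS), ?_⟩
    rw [Fin.sum_univ_castSucc]
    simp only [Fin.snoc_castSucc, Fin.snoc_last]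
    calc _ ≤ ‖∑ i, (g i - a)‖ ^ p + K * ‖z - a‖ ^ p := hf _ (by simpa using hfz)
      _ ≤ n * (K * D ^ p) + K * D ^ p := by gcongr; exact hSa z hzS
      _ = _ := by push_cast; ring

lemma exists_mem_convHullK_rpow_le (hp : 0 < p) (hK : 0 ≤ K)
    (hsmooth : ∀ u : X, ∃ f : StrongDual ℝ X, ∀ v, f v ≤ 0 → ‖u + v‖ ^ p ≤ ‖u‖ ^ p + K * ‖v‖ ^ p)
    (ha : a ∈ convexHull ℝ S) (hSa : ∀ z ∈ S, ‖z - a‖ ≤ D) {n : ℕ} (hn : n ≠ 0) :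
    ∃ y ∈ convHullK n S, (n * ‖y - a‖) ^ p ≤ n * (K * D ^ p) := by
  obtain ⟨g, hgS, hg⟩ := exists_mem_norm_sum_sub_rpow_le hp hK hsmooth ha hSa n
  refine ⟨_, inv_smul_sum_mem_convHullK hn hgS, ?_⟩
  have hsum : (n : ℝ) • ((n : ℝ)⁻¹ • ∑ i, g i - a) = ∑ i, (g i - a) := by
    rw [smul_sub, smul_inv_smul₀ (Nat.cast_ne_zero.2 hn), Finset.sum_sub_distrib]
    simp [Nat.cast_smul_eq_nsmul]
  rw [← hsum, norm_smul, Real.norm_natCast] at hg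
  exact hg

end Greedy

lemma le_of_mul_rpow_le {p K D ε n x : ℝ} (hp : 1 < p) (hK : 0 ≤ K) (hD : 0 ≤ D) (hε : 0 < ε)
    (hn : 0 < n) (hx : 0 ≤ x) (hxn : (n * x) ^ p ≤ n * (K * D ^ p))
    (hk : K ^ (p - 1)⁻¹ * (D / ε) ^ (p / (p - 1)) ≤ n) : x ≤ ε := by
  have hp1 : 0 < p - 1 := sub_pos.2 hp
  have hKn : K * (D / ε) ^ p ≤ n ^ (p - 1) := by
    rw [div_eq_mul_inv p, Real.rpow_mul (by positivity), ← Real.mul_rpow hK (by positivity)] at hk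
    simpa [Real.rpow_inv_rpow (by positivity : 0 ≤ K * (D / ε) ^ p) hp1.ne'] using
      Real.rpow_le_rpow (by positivity) hk hp1.le
  have hnp : n ^ p = n * n ^ (p - 1) := by
    rw [Real.rpow_sub hn, Real.rpow_one, mul_div_cancel₀ _ hn.ne']
  have hxp : n ^ (p - 1) * x ^ p ≤ n ^ (p - 1) * ε ^ p := by
    rw [Real.mul_rpow hn.le hx, hnp, mul_assoc] at hxn
    calc n ^ (p - 1) * x ^ p ≤ K * D ^ p := le_of_mul_le_mul_left hxn hn
      _ = K * (D / ε) ^ p * ε ^ p := by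
          rw [Real.div_rpow hD hε.le, mul_assoc, div_mul_cancel₀ _ (by positivity)]
      _ ≤ n ^ (p - 1) * ε ^ p := by gcongr
  exact (Real.rpow_le_rpow_iff hx hε.le (by linarith)).1
    (le_of_mul_le_mul_left hxp (by positivity))

theorem caratheodory_approximation_of_power_type_general {X : Type*} [NormedAddCommGroup X]
    [NormedSpace ℝ X]
    (p A : ℝ) (hp1 : 1 < p) (hA : 0 < A)
    (hpow : ∀ τ ∈ Set.Ioc (0 : ℝ) 1, modSmooth X τ ≤ A * τ ^ p) :
    ∃ C' : ℝ, 0 < C' ∧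
      ∀ S : Set X, Bornology.IsBounded S → ∀ ε : ℝ, 0 < ε → ∀ k : ℕ,
        C' * (Metric.diam S / ε) ^ (p / (p - 1)) ≤ (k : ℝ) →
        ∀ a ∈ convexHull ℝ S, Metric.infDist a (convHullK k S) ≤ ε := by
  refine ⟨((2 + 2 * A) ^ p) ^ (p - 1)⁻¹, by positivity, fun S hS ε hε k hk a ha => ?_⟩
  rcases eq_or_ne k 0 with rfl | hk0
  · rw [convHullK_zero, infDist_empty]
    exact hε.le
  have hSa : ∀ z ∈ S, ‖z - a‖ ≤ diam S := fun z hz => by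
    rw [← dist_eq_norm, ← convexHull_diam]
    exact dist_le_diam_of_mem (isBounded_convexHull.2 hS) (subset_convexHull ℝ S hz) ha
  obtain ⟨y, hy, hya⟩ := exists_mem_convHullK_rpow_le (by linarith) (by positivity)
    (exists_dual_norm_add_rpow_le hp1.le hA.le hpow) ha hSa hk0
  calc infDist a (convHullK k S) ≤ dist y a := dist_comm a y ▸ infDist_le_dist_of_mem hy
    _ = ‖y - a‖ := dist_eq_norm y a
    _ ≤ ε := le_of_mul_rpow_le hp1 (by positivity) diam_nonneg hε
        (Nat.cast_pos.2 (Nat.pos_of_ne_zero hk0)) (norm_nonneg _) hya hk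

/-- Carathéodory's approximation property for Banach spaces with modulus of smoothness
of power type `p ∈ (1, 2]`: there is a constant `C'` (depending only on `A` and `p`)
such that every point of `conv S` is within `ε` of `conv_k S` once
`k ≥ C' · (diam S / ε)^{p/(p−1)}`. -/
theorem caratheodory_approximation_of_power_type {X : Type*} [NormedAddCommGroup X]
    [NormedSpace ℝ X] [CompleteSpace X]
    (p A : ℝ) (hp1 : 1 < p) (hp2 : p ≤ 2) (hA : 0 < A)
    (hpow : ∀ τ ∈ Set.Ioc (0 : ℝ) 1, modSmooth X τ ≤ A * τ ^ p) :
    ∃ C' : ℝ, 0 < C' ∧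
      ∀ S : Set X, Bornology.IsBounded S → ∀ ε : ℝ, 0 < ε → ∀ k : ℕ,
        C' * (Metric.diam S / ε) ^ (p / (p - 1)) ≤ (k : ℝ) →
        ∀ a ∈ convexHull ℝ S, Metric.infDist a (convHullK k S) ≤ ε :=
  caratheodory_approximation_of_power_type_general p A hp1 hA hpow
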